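/- Let n ≥ 2 and let C ≥ 1. Let x_0 ∈ ℝ^n satisfy x_{0,i} ≥ 0 for all i, ∑_{i=1}^n x_{0,i} = 1, and max_{1≤i≤n} x_{0,i} ≤ C/n. Then for the repeated averaging chain started at x_0, with T(k) = ∑_{i=1}^n |x_{k,i} − 1/n|, the expectation under μ_n satisfies E(T(k)) ≤ √C · e^{−k/(2n)} for every k ≥ 0. -/

import Mathlib

open MeasureTheory Finset Filter
open scoped ENNReal NNReal

/-- The set of unordered pairs of distinct indices in `Fin n`, encoded as
2-element subsets of `Fin n`. -/
abbrev Pairs (n : ℕ) : Type := {s : Finset (Fin n) // s.card = 2}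

instance (n : ℕ) : MeasurableSpace (Pairs n) := ⊤

/-- The uniform probability measure on the set of pairs. -/
noncomputable def uniformPair (n : ℕ) : Measure (Pairs n) :=
  (Fintype.card (Pairs n) : ℝ≥0∞)⁻¹ • Measure.count

/-- `μ` is the infinite product over `ℕ` of the uniform measure on pairs:
its finite-dimensional marginals are the finite uniform product measures.
(This characterizes the infinite product measure uniquely.) -/
def IsProductLaw (n : ℕ) (μ : Measure (ℕ → Pairs n)) : Prop :=
  ∀ K : ℕ, μ.map (fun ω (i : Fin K) => ω i) = Measure.pi fun _ : Fin K => uniformPair n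

/-- The pair-averaging operation: both coordinates in `s` (a 2-element set `{i,j}`)
are replaced by `(x i + x j)/2`; the other coordinates are unchanged. -/
noncomputable def avgStep {n : ℕ} (s : Finset (Fin n)) (x : Fin n → ℝ) : Fin n → ℝ :=
  fun l => if l ∈ s then (∑ m ∈ s, x m) / 2 else x l

/-- The repeated averaging chain started at `x0`, driven by the pair sequence `ω`. -/
noncomputable def chain {n : ℕ} (x0 : Fin n → ℝ) (ω : ℕ → Pairs n) : ℕ → Fin n → ℝ
  | 0 => x0
  | k + 1 => avgStep (ω k).1 (chain x0 ω k)

/-- `T(k) = ∑_i |x_{k,i} - 1/n|`. -/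
noncomputable def Tdist {n : ℕ} (x0 : Fin n → ℝ) (ω : ℕ → Pairs n) (k : ℕ) : ℝ :=
  ∑ i, |chain x0 ω k i - 1 / n|

/-- The initial vector `(1,0,…,0)`. -/
def e1 (n : ℕ) : Fin n → ℝ := fun i => if i.val = 0 then 1 else 0

/-- The standard normal cumulative distribution function. -/
noncomputable def stdGaussianCDF (x : ℝ) : ℝ :=
  ∫ t in Set.Iic x, (2 * Real.pi) ^ (-(1:ℝ)/2) * Real.exp (-t ^ 2 / 2)

/-!
Let `V(x) = ∑ i, (x i - 1/n)^2`. Averaging the pair `{a, b}` lowers `V` by `(x a - x b)^2 / 2`,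
and for `∑ i, x i = 1` the identity `∑_{a<b} (x a - x b)^2 = n V(x)` shows that a uniformly random
pair lowers `V` on average by the factor `(n - 2)/(n - 1) ≤ e^{-1/n}`. Pointwise Cauchy–Schwarz
gives `T ≤ √(n V)`, Jensen moves the expectation inside the square root, and the hypotheses give
`n V(x₀) = n ∑ i, x₀ i ^ 2 - 1 ≤ C`.
-/

open scoped BigOperators

section FiniteSums
variable {α M : Type*} [AddCommMonoid M]

lemma sum_offDiag_eq_sum_product [DecidableEq α] (s : Finset α) {F : α × α → M}
    (hF : ∀ i, F (i, i) = 0) : ∑ p ∈ s.offDiag, F p = ∑ p ∈ s ×ˢ s, F p := by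
  refine sum_subset (fun p hp => mem_product.2 ⟨(mem_offDiag.1 hp).1, (mem_offDiag.1 hp).2.1⟩) ?_
  rintro ⟨i, j⟩ hp hnot
  obtain rfl : i = j := by
    simpa [mem_offDiag, (mem_product.1 hp).1, (mem_product.1 hp).2] using hnot
  exact hF i

lemma sum_card_two_sum_offDiag [Fintype α] [DecidableEq α] (F : α × α → M) :
    ∑ s : {s : Finset α // s.card = 2}, ∑ p ∈ s.1.offDiag, F p = ∑ p ∈ univ.offDiag, F p := by
  rw [← sum_subtype (powersetCard 2 univ) (fun s => by simp [mem_powersetCard])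
      (fun s => ∑ p ∈ s.offDiag, F p),
    sum_comm' (t' := univ.offDiag) (s' := fun p => {{p.1, p.2}})]
  · simp
  · rintro s ⟨i, j⟩
    simp only [mem_powersetCard, subset_univ, true_and, mem_offDiag, mem_univ, mem_singleton]
    constructor
    · rintro ⟨hs, hi, hj, hij⟩
      exact ⟨(eq_of_subset_of_card_le (insert_subset hi (singleton_subset_iff.2 hj))
        (by rw [hs, card_pair hij])).symm, hij⟩
    · rintro ⟨rfl, hij⟩
      exact ⟨card_pair hij, by simp, by simp, hij⟩

lemma sum_sum_sq_sub [Fintype α] (x : α → ℝ) :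
    ∑ i, ∑ j, (x i - x j) ^ 2 = 2 * (Fintype.card α * ∑ i, x i ^ 2 - (∑ i, x i) ^ 2) := by
  simp only [sub_sq, sum_add_distrib, sum_sub_distrib, ← sum_mul, ← mul_sum, sum_const,
    card_univ, nsmul_eq_mul]
  ring

lemma sum_abs_le_sqrt_card_mul_sum_sq {ι : Type*} (s : Finset ι) (f : ι → ℝ) :
    ∑ i ∈ s, |f i| ≤ √(#s * ∑ i ∈ s, f i ^ 2) := by
  refine Real.le_sqrt_of_sq_le ?_
  simpa only [sq_abs] using sq_sum_le_card_mul_sum_sq (s := s) (f := fun i => |f i|)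

lemma expect_sqrt_le_sqrt_expect {ι : Type*} (s : Finset ι) {f : ι → ℝ}
    (hf : ∀ i ∈ s, 0 ≤ f i) : 𝔼 i ∈ s, √(f i) ≤ √(𝔼 i ∈ s, f i) := by
  refine Real.le_sqrt_of_sq_le ?_
  rw [expect_eq_sum_div_card, expect_eq_sum_div_card,
    ← sum_congr rfl fun i hi => Real.sq_sqrt (hf i hi)]
  exact sum_div_card_sq_le_sum_sq_div_card

end FiniteSums

section AverageStep
variable {n : ℕ}

lemma sum_comp_avgStep_pair (g : ℝ → ℝ) {a b : Fin n} (hab : a ≠ b) (x : Fin n → ℝ) :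
    ∑ i, g (avgStep {a, b} x i) =
      ∑ i, g (x i) + (2 * g ((x a + x b) / 2) - g (x a) - g (x b)) := by
  have hsplit (f : Fin n → ℝ) : ∑ i, f i = ∑ i ∈ univ \ {a, b}, f i + (f a + f b) := by
    rw [← sum_pair hab, sum_sdiff (subset_univ _)]
  have hout : ∀ i ∈ univ \ {a, b}, avgStep {a, b} x i = x i := fun i hi =>
    if_neg (mem_sdiff.1 hi).2
  have hin : ∀ i ∈ ({a, b} : Finset (Fin n)), avgStep {a, b} x i = (x a + x b) / 2 :=
    fun i hi => by rw [avgStep, if_pos hi, sum_pair hab]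
  rw [hsplit, hsplit (fun i => g (x i)), sum_congr rfl fun i hi => by rw [hout i hi],
    hin a (by simp), hin b (by simp)]
  ring

lemma sum_avgStep {s : Finset (Fin n)} (hs : s.card = 2) (x : Fin n → ℝ) :
    ∑ i, avgStep s x i = ∑ i, x i := by
  obtain ⟨a, b, hab, rfl⟩ := card_eq_two.1 hs
  rw [sum_comp_avgStep_pair (fun t => t) hab]
  ring

lemma sum_chain (x0 : Fin n → ℝ) (ω : ℕ → Pairs n) (k : ℕ) :
    ∑ i, chain x0 ω k i = ∑ i, x0 i := by
  induction k with
  | zero => rfl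
  | succ k ih => rw [chain, sum_avgStep (ω k).2, ih]

noncomputable def sqDistUniform (x : Fin n → ℝ) : ℝ := ∑ i, (x i - 1 / n) ^ 2

lemma sqDistUniform_nonneg (x : Fin n → ℝ) : 0 ≤ sqDistUniform x :=
  sum_nonneg fun _ _ => sq_nonneg _

lemma sqDistUniform_avgStep_pair {a b : Fin n} (hab : a ≠ b) (x : Fin n → ℝ) :
    sqDistUniform (avgStep {a, b} x) = sqDistUniform x - (x a - x b) ^ 2 / 2 := by
  rw [sqDistUniform, sqDistUniform, sum_comp_avgStep_pair (fun t => (t - 1 / n) ^ 2) hab]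
  ring

lemma natCast_mul_sqDistUniform (hn : n ≠ 0) {x : Fin n → ℝ} (hx : ∑ i, x i = 1) :
    n * sqDistUniform x = n * ∑ i, x i ^ 2 - 1 := by
  have hn' : (n : ℝ) ≠ 0 := Nat.cast_ne_zero.2 hn
  simp only [sqDistUniform, sub_sq, sum_add_distrib, sum_sub_distrib, ← sum_mul, ← mul_sum, hx,
    sum_const, card_univ, Fintype.card_fin, nsmul_eq_mul]
  field_simp
  ring

lemma natCast_mul_sqDistUniform_le (hn : n ≠ 0) {x : Fin n → ℝ} {C : ℝ}
    (hpos : ∀ i, 0 ≤ x i) (hsum : ∑ i, x i = 1) (hmax : ∀ i, x i ≤ C / n) :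
    n * sqDistUniform x ≤ C := by
  have hsq : ∑ i, x i ^ 2 ≤ C / n := calc
    ∑ i, x i ^ 2 ≤ ∑ i, C / n * x i :=
      sum_le_sum fun i _ => by rw [sq]; exact mul_le_mul_of_nonneg_right (hmax i) (hpos i)
    _ = C / n := by rw [← mul_sum, hsum, mul_one]
  have hC : (n : ℝ) * (C / n) = C := mul_div_cancel₀ _ (Nat.cast_ne_zero.2 hn)
  rw [natCast_mul_sqDistUniform hn hsum]
  linarith [mul_le_mul_of_nonneg_left hsq (Nat.cast_nonneg (α := ℝ) n)]

lemma Tdist_le_sqrt_mul_sqDistUniform (x0 : Fin n → ℝ) (ω : ℕ → Pairs n) (k : ℕ) :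
    Tdist x0 ω k ≤ √(n * sqDistUniform (chain x0 ω k)) := by
  simpa [Tdist, sqDistUniform] using
    sum_abs_le_sqrt_card_mul_sum_sq univ fun i => chain x0 ω k i - 1 / n

end AverageStep

section Contraction
variable {n : ℕ}

lemma sum_pairs_sum_sq_sub (x : Fin n → ℝ) :
    ∑ s : Pairs n, ∑ p ∈ s.1 ×ˢ s.1, (x p.1 - x p.2) ^ 2 =
      2 * (n * ∑ i, x i ^ 2 - (∑ i, x i) ^ 2) := by
  have hdiag (s : Finset (Fin n)) :
      ∑ p ∈ s.offDiag, (x p.1 - x p.2) ^ 2 = ∑ p ∈ s ×ˢ s, (x p.1 - x p.2) ^ 2 :=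
    sum_offDiag_eq_sum_product s (F := fun p => (x p.1 - x p.2) ^ 2) fun i => by simp
  simp_rw [← hdiag]
  rw [sum_card_two_sum_offDiag, hdiag, sum_product, sum_sum_sq_sub, Fintype.card_fin]

-- A pair carries no order on its two points, so `2 (x a - x b)^2` is read off as the
-- symmetric sum over `s ×ˢ s`.
lemma sqDistUniform_avgStep (s : Pairs n) (x : Fin n → ℝ) :
    sqDistUniform (avgStep s.1 x) =
      sqDistUniform x - (∑ p ∈ s.1 ×ˢ s.1, (x p.1 - x p.2) ^ 2) / 4 := by
  obtain ⟨a, b, hab, hs⟩ := card_eq_two.1 s.2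
  rw [hs, sqDistUniform_avgStep_pair hab, sum_product, sum_pair hab, sum_pair hab, sum_pair hab]
  ring

lemma expect_sqDistUniform_avgStep (hn : 2 ≤ n) {x : Fin n → ℝ} (hx : ∑ i, x i = 1) :
    𝔼 s : Pairs n, sqDistUniform (avgStep s.1 x) = (n - 2) / (n - 1) * sqDistUniform x := by
  have hn' : (2 : ℝ) ≤ n := by exact_mod_cast hn
  have hV := natCast_mul_sqDistUniform (by omega) hx
  rw [Fintype.expect_eq_sum_div_card, sum_congr rfl fun s _ => sqDistUniform_avgStep s x,
    sum_sub_distrib, ← sum_div, sum_pairs_sum_sq_sub, hx, one_pow, ← hV, sum_const, card_univ,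
    Fintype.card_finset_len, Fintype.card_fin, nsmul_eq_mul, Nat.cast_choose_two]
  have : (n : ℝ) - 1 ≠ 0 := by linarith
  field_simp
  ring

lemma sub_two_div_sub_one_pow_le_exp (hn : 2 ≤ n) (k : ℕ) :
    (((n : ℝ) - 2) / (n - 1)) ^ k ≤ Real.exp (-(k : ℝ) / n) := by
  have hn' : (2 : ℝ) ≤ n := by exact_mod_cast hn
  have hρ : ((n : ℝ) - 2) / (n - 1) ≤ Real.exp (-1 / n) := calc
    _ ≤ -1 / (n : ℝ) + 1 := by
      rw [div_le_iff₀ (by linarith), div_add_one (by positivity), div_mul_eq_mul_div,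
        le_div_iff₀ (by positivity)]
      nlinarith
    _ ≤ _ := Real.add_one_le_exp _
  calc _ ≤ Real.exp (-1 / n) ^ k :=
        pow_le_pow_left₀ (div_nonneg (by linarith) (by linarith)) hρ k
    _ = _ := by rw [← Real.exp_nat_mul]; ring_nf

end Contraction

section FiniteHorizon
variable {n : ℕ}

def extendSeq {α : Type*} (a₀ : α) {k : ℕ} (σ : Fin k → α) : ℕ → α :=
  fun m => if h : m < k then σ ⟨m, h⟩ else a₀

lemma chain_congr (x0 : Fin n → ℝ) {ω ω' : ℕ → Pairs n} {k : ℕ} (h : ∀ m < k, ω m = ω' m) :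
    chain x0 ω k = chain x0 ω' k := by
  induction k with
  | zero => rfl
  | succ k ih => rw [chain, chain, ih fun m hm => h m (by omega), h k (by omega)]

lemma chain_extendSeq_snoc (x0 : Fin n → ℝ) (s₀ : Pairs n) {k : ℕ} (τ : Fin k → Pairs n)
    (s : Pairs n) :
    chain x0 (extendSeq s₀ (Fin.snoc τ s : Fin (k + 1) → Pairs n)) (k + 1) =
      avgStep s.1 (chain x0 (extendSeq s₀ τ) k) := by
  have hinit : chain x0 (extendSeq s₀ (Fin.snoc τ s : Fin (k + 1) → Pairs n)) k =
      chain x0 (extendSeq s₀ τ) k := by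
    refine chain_congr x0 fun m hm => ?_
    simp only [extendSeq, dif_pos hm, dif_pos (hm.trans k.lt_succ_self)]
    exact Fin.snoc_castSucc (α := fun _ => Pairs n) s τ ⟨m, hm⟩
  rw [chain, hinit]
  simp only [extendSeq, dif_pos k.lt_succ_self]
  congr
  exact Fin.snoc_last (α := fun _ => Pairs n) s τ

lemma expect_sqDistUniform_chain (hn : 2 ≤ n) {x0 : Fin n → ℝ} (hx : ∑ i, x0 i = 1)
    (s₀ : Pairs n) (k : ℕ) :
    𝔼 σ : Fin k → Pairs n, sqDistUniform (chain x0 (extendSeq s₀ σ) k) =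
      ((n - 2) / (n - 1)) ^ k * sqDistUniform x0 := by
  induction k with
  | zero => simp [chain]
  | succ k ih =>
    rw [← Fintype.expect_equiv (Fin.snocEquiv fun _ => Pairs n)
      (fun p => sqDistUniform
        (chain x0 (extendSeq s₀ (Fin.snoc p.2 p.1 : Fin (k + 1) → Pairs n)) (k + 1)))
      _ fun _ => rfl]
    simp_rw [chain_extendSeq_snoc]
    rw [← univ_product_univ, expect_product' univ univ
      fun (s : Pairs n) (τ : Fin k → Pairs n) =>
        sqDistUniform (avgStep s.1 (chain x0 (extendSeq s₀ τ) k)), expect_comm]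
    simp_rw [expect_sqDistUniform_avgStep hn ((sum_chain x0 _ k).trans hx)]
    rw [← mul_expect, ih]
    ring

lemma chain_extendSeq_restrict (x0 : Fin n → ℝ) (s₀ : Pairs n) (ω : ℕ → Pairs n) (k : ℕ) :
    chain x0 (extendSeq s₀ fun i : Fin k => ω i) k = chain x0 ω k :=
  chain_congr x0 fun _ hm => dif_pos hm

end FiniteHorizon

lemma nonempty_pairs {n : ℕ} (hn : 2 ≤ n) : Nonempty (Pairs n) :=
  Fintype.card_pos_iff.1 <| by
    rw [Fintype.card_finset_len, Fintype.card_fin]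
    exact Nat.choose_pos hn

instance (n : ℕ) : DiscreteMeasurableSpace (Pairs n) := ⟨fun _ => trivial⟩

lemma uniformPair_singleton {n : ℕ} (s : Pairs n) :
    uniformPair n {s} = (Fintype.card (Pairs n) : ℝ≥0∞)⁻¹ := by
  rw [uniformPair, Measure.smul_apply, Measure.count_singleton, smul_eq_mul, mul_one]

instance (n : ℕ) [Nonempty (Pairs n)] : IsProbabilityMeasure (uniformPair n) where
  measure_univ := by
    rw [uniformPair, Measure.smul_apply, Measure.count_univ, ENat.card_eq_coe_fintype_card,
      ENat.toENNReal_coe, smul_eq_mul,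
      ENNReal.inv_mul_cancel (by exact_mod_cast Fintype.card_ne_zero) (by simp)]

lemma IsProductLaw.integral_comp_restrict {n : ℕ} [Nonempty (Pairs n)]
    {μ : Measure (ℕ → Pairs n)} (hμ : IsProductLaw n μ) {k : ℕ} (F : (Fin k → Pairs n) → ℝ) :
    ∫ ω, F (fun i : Fin k => ω i) ∂μ = 𝔼 σ, F σ := by
  have hrestrict : Measurable fun (ω : ℕ → Pairs n) (i : Fin k) => ω i :=
    measurable_pi_lambda _ fun i => measurable_pi_apply _
  rw [← integral_map hrestrict.aemeasurable (measurable_of_countable F).aestronglyMeasurable,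
    hμ k, integral_fintype .of_finite, Fintype.expect_eq_sum_div_card, sum_div]
  refine sum_congr rfl fun σ _ => ?_
  rw [div_eq_inv_mul, smul_eq_mul]
  simp [measureReal_def, uniformPair_singleton]

theorem expected_L1_bound_spread_initial_general (n : ℕ) (hn : 2 ≤ n)
    (μ : Measure (ℕ → Pairs n)) (hμ : IsProductLaw n μ)
    (C : ℝ) (x0 : Fin n → ℝ)
    (hpos : ∀ i, 0 ≤ x0 i) (hsum : ∑ i, x0 i = 1)
    (hmax : ∀ i, x0 i ≤ C / n) (k : ℕ) :
    ∫ ω, Tdist x0 ω k ∂μ ≤ Real.sqrt C * Real.exp (-(k : ℝ) / (2 * n)) := by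
  have := nonempty_pairs hn
  have s₀ : Pairs n := Classical.arbitrary _
  have hV0 := natCast_mul_sqDistUniform_le (by omega) hpos hsum hmax
  calc ∫ ω, Tdist x0 ω k ∂μ = 𝔼 σ : Fin k → Pairs n, Tdist x0 (extendSeq s₀ σ) k := by
        rw [← hμ.integral_comp_restrict]
        simp only [Tdist, chain_extendSeq_restrict]
    _ ≤ 𝔼 σ : Fin k → Pairs n, √(n * sqDistUniform (chain x0 (extendSeq s₀ σ) k)) :=
        expect_le_expect fun σ _ => Tdist_le_sqrt_mul_sqDistUniform x0 _ k
    _ ≤ √(𝔼 σ : Fin k → Pairs n, n * sqDistUniform (chain x0 (extendSeq s₀ σ) k)) :=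
        expect_sqrt_le_sqrt_expect _ fun _ _ =>
          mul_nonneg (Nat.cast_nonneg n) (sqDistUniform_nonneg _)
    _ = √((n * sqDistUniform x0) * (((n : ℝ) - 2) / (n - 1)) ^ k) := by
        rw [← mul_expect, expect_sqDistUniform_chain hn hsum]
        ring_nf
    _ ≤ √(C * Real.exp (-(k : ℝ) / n)) := Real.sqrt_le_sqrt (mul_le_mul_of_nonneg hV0
        (sub_two_div_sub_one_pow_le_exp hn k) (mul_nonneg (Nat.cast_nonneg n)
          (sqDistUniform_nonneg x0)) (Real.exp_pos _).le)
    _ = √C * Real.exp (-(k : ℝ) / (2 * n)) := by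
        rw [Real.sqrt_mul' _ (Real.exp_pos _).le, ← Real.exp_half]
        ring_nf

/-- **Fast decay for spread-out initial conditions.** If `x₀` is nonnegative with total
mass `1` and maximum entry at most `C/n` (`C ≥ 1`), then `E(T(k)) ≤ √C e^{-k/(2n)}`. -/
theorem expected_L1_bound_spread_initial (n : ℕ) (hn : 2 ≤ n)
    (μ : Measure (ℕ → Pairs n)) (hμ : IsProductLaw n μ)
    (C : ℝ) (hC : 1 ≤ C) (x0 : Fin n → ℝ)
    (hpos : ∀ i, 0 ≤ x0 i) (hsum : ∑ i, x0 i = 1)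
    (hmax : ∀ i, x0 i ≤ C / n) (k : ℕ) :
    ∫ ω, Tdist x0 ω k ∂μ ≤ Real.sqrt C * Real.exp (-(k : ℝ) / (2 * n)) :=
  expected_L1_bound_spread_initial_general n hn μ hμ C x0 hpos hsum hmax k
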